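/- arXiv:2010.10155 — 3 statements merged into one kernel-verified Lean document; each statement's English description precedes it below -/
import Mathlib

section
/- Let Φ(X) = ∑_{n≥0} count(n)·Xⁿ be the ordinary generating function (a formal power series over ℚ) of the number count(n) of formulae of size n. Then Φ satisfies the algebraic equation (1 − X)²·Φ(X) = X³ + (1 − X)²·( 3X·Φ(X) + 2X·Φ(X)² ). (Equivalently, Φ(X) = X·(X/(1−X))² + 2X·Φ(X) + X·Φ(X) + 2X·Φ(X)², the five summands on the right corresponding to atomic formulae, the two quantifiers, negation, and the two binary connectives.) -/
/-!
Symbolic method. Splitting a formula by its outermost constructor is a bijection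
`Fml ≃ ℕ² ⊕ (Fml ⊕ Fml ⊕ Fml) ⊕ Fml² ⊕ Fml²` under which the size becomes `i + j + 3` on atoms
and one more than the (total) size of the immediate subformulae otherwise. Generating functions
turn disjoint unions into sums, pairs with additive weight into products and a weight shift
by `k` into multiplication by `X ^ k`; since `ℕ` weighted by itself has generating function
`1 / (1 - X)`, this gives `Φ = X³ / (1 - X)² + 3XΦ + 2XΦ²`.
-/

/-- Formulae of the first-order language of set theory (one binary membership
predicate, no function symbols) in De Bruijn notation, with the functionally
complete connective set `{∧, ∨, ¬}`. -/
inductive Fml : Type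
  | mem  : ℕ → ℕ → Fml        -- atomic formula (i ∈ j), De Bruijn indices i, j
  | neg  : Fml → Fml           -- ¬φ
  | conj : Fml → Fml → Fml     -- φ ∧ ψ
  | disj : Fml → Fml → Fml     -- φ ∨ ψ
  | all  : Fml → Fml           -- ∀φ
  | ex   : Fml → Fml           -- ∃φ

/-- Natural size model: every constructor has weight 1, index `i` is written
in unary as `Sⁱ0` (hence contributes `i + 1`), so `|i ∈ j| = i + j + 3`. -/
def Fml.size : Fml → ℕ
  | mem i j  => i + j + 3
  | neg φ    => φ.size + 1
  | conj φ ψ => φ.size + ψ.size + 1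
  | disj φ ψ => φ.size + ψ.size + 1
  | all φ    => φ.size + 1
  | ex φ     => φ.size + 1

/-- `φ.OpenAt m` means `φ` is `m`-open: prepending `m` quantifiers turns `φ`
into a sentence. Sentences are the `0`-open formulae. -/
def Fml.OpenAt : ℕ → Fml → Prop
  | m, mem i j  => i < m ∧ j < m
  | m, neg φ    => φ.OpenAt m
  | m, conj φ ψ => φ.OpenAt m ∧ ψ.OpenAt m
  | m, disj φ ψ => φ.OpenAt m ∧ ψ.OpenAt m
  | m, all φ    => φ.OpenAt (m + 1)
  | m, ex φ     => φ.OpenAt (m + 1)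

/-- `count n`: the number of formulae of size `n`. -/
noncomputable def count (n : ℕ) : ℕ := Nat.card {φ : Fml // φ.size = n}

/-- `countOpen m n`: the number of `m`-open formulae of size `n`. -/
noncomputable def countOpen (m n : ℕ) : ℕ :=
  Nat.card {φ : Fml // φ.OpenAt m ∧ φ.size = n}

/-- The ordinary generating function `Φ(X) = ∑_{n≥0} count(n)·Xⁿ` of the number
of formulae of size `n`, as a formal power series over `ℚ`. -/
noncomputable def Phi : PowerSeries ℚ := PowerSeries.mk fun n => (count n : ℚ)

open PowerSeries
open Finset.HasAntidiagonal (antidiagonal mem_antidiagonal)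

section WeightedCounting

variable {α β R : Type*} [Semiring R]

variable (R) in
/-- Only meaningful when every fibre of `w` is finite: `Nat.card` of an infinite type is `0`. -/
noncomputable def ogf (w : α → ℕ) : R⟦X⟧ := mk fun n => (Nat.card {a // w a = n} : R)

theorem ogf_congr (e : α ≃ β) {w : α → ℕ} {v : β → ℕ} (h : ∀ a, v (e a) = w a) :
    ogf R w = ogf R v := by
  ext n
  simp only [ogf, coeff_mk]
  rw [Nat.card_congr (e.subtypeEquiv (q := fun b => v b = n) fun a => by rw [h])]

def sumElimFiberEquiv (w : α → ℕ) (v : β → ℕ) (n : ℕ) :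
    {x // Sum.elim w v x = n} ≃ {a // w a = n} ⊕ {b // v b = n} :=
  Equiv.subtypeSum

instance finite_sumElim_fiber (w : α → ℕ) (v : β → ℕ) (n : ℕ) [Finite {a // w a = n}]
    [Finite {b // v b = n}] : Finite {x // Sum.elim w v x = n} :=
  Finite.of_equiv _ (sumElimFiberEquiv w v n).symm

theorem ogf_sumElim (w : α → ℕ) (v : β → ℕ) [∀ n, Finite {a // w a = n}]
    [∀ n, Finite {b // v b = n}] : ogf R (Sum.elim w v) = ogf R w + ogf R v := by
  ext n
  simp only [ogf, coeff_mk, map_add]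
  rw [Nat.card_congr (sumElimFiberEquiv w v n), Nat.card_sum, Nat.cast_add]

def prodFiberEquiv (w : α → ℕ) (v : β → ℕ) (n : ℕ) :
    {q : α × β // w q.1 + v q.2 = n} ≃
      Σ p : antidiagonal n, {a // w a = p.1.1} × {b // v b = p.1.2} where
  toFun q := ⟨⟨(w q.1.1, v q.1.2), mem_antidiagonal.2 q.2⟩, ⟨q.1.1, rfl⟩, ⟨q.1.2, rfl⟩⟩
  invFun x := ⟨(x.2.1, x.2.2), by rw [x.2.1.2, x.2.2.2]; exact mem_antidiagonal.1 x.1.2⟩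
  left_inv q := rfl
  right_inv := by
    rintro ⟨⟨⟨i, j⟩, h⟩, ⟨a, ha : w a = i⟩, ⟨b, hb : v b = j⟩⟩
    subst ha hb
    rfl

instance finite_prod_fiber (w : α → ℕ) (v : β → ℕ) [∀ n, Finite {a // w a = n}]
    [∀ n, Finite {b // v b = n}] (n : ℕ) : Finite {q : α × β // w q.1 + v q.2 = n} :=
  Finite.of_equiv _ (prodFiberEquiv w v n).symm

theorem ogf_prod (w : α → ℕ) (v : β → ℕ) [∀ n, Finite {a // w a = n}]
    [∀ n, Finite {b // v b = n}] :
    ogf R (fun q : α × β => w q.1 + v q.2) = ogf R w * ogf R v := by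
  ext n
  simp only [ogf, coeff_mk, coeff_mul]
  rw [Nat.card_congr (prodFiberEquiv w v n), Nat.card_sigma, ← Finset.sum_coe_sort (antidiagonal n)]
  push_cast [Nat.card_prod]
  rfl

instance finite_add_const_fiber (w : α → ℕ) (k n : ℕ) [Finite {a // w a = n - k}] :
    Finite {a // w a + k = n} :=
  Finite.of_injective (fun a => (⟨a.1, by omega⟩ : {a // w a = n - k}))
    fun _ _ h => Subtype.ext (Subtype.mk.inj h)

theorem ogf_add_const (w : α → ℕ) (k : ℕ) : ogf R (fun a => w a + k) = X ^ k * ogf R w := by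
  ext n
  simp only [ogf, coeff_mk, coeff_X_pow_mul']
  split_ifs with hk
  · rw [Nat.card_congr (Equiv.subtypeEquivRight (q := fun a => w a = n - k) fun a => by omega)]
  · have : IsEmpty {a // w a + k = n} := ⟨fun a => hk (a.2 ▸ Nat.le_add_left k (w a))⟩
    simp

theorem ogf_id : ogf R (fun n : ℕ => n) = mk 1 := by
  ext n
  simp [ogf]

end WeightedCounting

theorem Fml.finite_setOf_size_le (n : ℕ) : {φ : Fml | φ.size ≤ n}.Finite := by
  induction n with
  | zero =>
    convert Set.finite_empty
    ext φ
    cases φ <;> simp [Fml.size]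
  | succ n ih =>
    -- the indices of an atom, and the immediate subformulae of a compound, have size `≤ n`
    refine ((((((Set.finite_Iic n).image2 Fml.mem (Set.finite_Iic n)).union
      (ih.image Fml.neg)).union (ih.image Fml.all)).union (ih.image Fml.ex)).union
      (ih.image2 Fml.conj ih)).union (ih.image2 Fml.disj ih) |>.subset ?_
    rintro (_ | _ | _ | _ | _ | _) h <;> simp [Fml.size] at h ⊢ <;> omega

instance Fml.finite_size_fiber (n : ℕ) : Finite {φ : Fml // φ.size = n} :=
  ((Fml.finite_setOf_size_le n).subset fun _ h => le_of_eq h).to_subtype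

def Fml.equivSum : Fml ≃ (ℕ × ℕ) ⊕ ((Fml ⊕ Fml ⊕ Fml) ⊕ (Fml × Fml) ⊕ (Fml × Fml)) where
  toFun
    | .mem i j => .inl (i, j)
    | .neg φ => .inr (.inl (.inl φ))
    | .all φ => .inr (.inl (.inr (.inl φ)))
    | .ex φ => .inr (.inl (.inr (.inr φ)))
    | .conj φ ψ => .inr (.inr (.inl (φ, ψ)))
    | .disj φ ψ => .inr (.inr (.inr (φ, ψ)))
  invFun
    | .inl (i, j) => .mem i j
    | .inr (.inl (.inl φ)) => .neg φ
    | .inr (.inl (.inr (.inl φ))) => .all φ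
    | .inr (.inl (.inr (.inr φ))) => .ex φ
    | .inr (.inr (.inl (φ, ψ))) => .conj φ ψ
    | .inr (.inr (.inr (φ, ψ))) => .disj φ ψ
  left_inv φ := by cases φ <;> rfl
  right_inv x := by rcases x with ⟨i, j⟩ | (φ | φ | φ) | ⟨φ, ψ⟩ | ⟨φ, ψ⟩ <;> rfl

theorem Fml.ogf_size : ogf ℚ Fml.size
    = X ^ 3 * (mk 1 * mk 1) + X * (3 * ogf ℚ Fml.size + 2 * ogf ℚ Fml.size ^ 2) := by
  -- instance search cannot unify `p.1 + p.2` with the product weight `w q.1 + v q.2`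
  have : ∀ n, Finite {p : ℕ × ℕ // p.1 + p.2 = n} := finite_prod_fiber (fun i => i) (fun i => i)
  calc ogf ℚ Fml.size
      = ogf ℚ (Sum.elim (fun p : ℕ × ℕ => p.1 + p.2 + 3) fun x =>
          Sum.elim (Sum.elim Fml.size (Sum.elim Fml.size Fml.size))
            (Sum.elim (fun q : Fml × Fml => q.1.size + q.2.size)
              fun q : Fml × Fml => q.1.size + q.2.size) x + 1) :=
        ogf_congr Fml.equivSum fun φ => by cases φ <;> rfl
    _ = _ := by
        rw [ogf_sumElim, ogf_add_const, ogf_add_const,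
          ogf_prod (fun i : ℕ => i) (fun i : ℕ => i), ogf_id,
          ogf_sumElim, ogf_sumElim, ogf_sumElim, ogf_sumElim, ogf_prod Fml.size Fml.size]
        ring

open PowerSeries in
/-- `(1 − X)²·Φ(X) = X³ + (1 − X)²·(3X·Φ(X) + 2X·Φ(X)²)`, equivalently
`Φ = X·(X/(1−X))² + 2X·Φ + X·Φ + 2X·Φ²`, the summands corresponding to atoms,
the two quantifiers, negation, and the two binary connectives. -/
theorem phi_algebraic_equation :
    (1 - X) ^ 2 * Phi
      = X ^ 3 + (1 - X) ^ 2 * (3 * X * Phi + 2 * X * Phi ^ 2) := by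
  have hPhi : Phi = ogf ℚ Fml.size := rfl
  rw [hPhi]
  linear_combination (1 - X) ^ 2 * Fml.ogf_size
    + X ^ 3 * (mk 1 * (1 - X) + 1) * mk_one_mul_one_sub_eq_one ℚ
end

section
/- For each m ∈ ℕ let Φ_m(X) = ∑_{n≥0} count_m(n)·Xⁿ be the generating function (formal power series over ℚ) of the number count_m(n) of m-open formulae of size n. Then for every m ∈ ℕ, (1 − X)²·Φ_m(X) = X³·(1 − X^m)² + (1 − X)²·( 2X·Φ_{m+1}(X) + X·Φ_m(X) + 2X·Φ_m(X)² ). -/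
/-- The generating function `Φ_m(X) = ∑_{n≥0} count_m(n)·Xⁿ` of the number of
`m`-open formulae of size `n`, as a formal power series over `ℚ`. -/
noncomputable def PhiOpen (m : ℕ) : PowerSeries ℚ :=
  PowerSeries.mk fun n => (countOpen m n : ℚ)

/-!
By its head constructor, an `m`-open formula of size `n + 1` is an atom `i ∈ j` with
`i, j < m` and `i + j + 3 = n + 1`, the negation of an `m`-open formula of size `n`, a conjunction
or disjunction of two `m`-open formulae whose sizes add up to `n`, or a quantification of an
`(m + 1)`-open formula of size `n`. Hence `Φ_m = A_m + X·(Φ_m + 2·Φ_m² + 2·Φ_{m+1})`, where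
`A_m = ∑_{i,j<m} X^{i+j+3} = X³·(∑_{i<m} Xⁱ)²`, and `(1 - X)·∑_{i<m} Xⁱ = 1 - X^m`.
-/

deriving instance DecidableEq for Fml

open Finset PowerSeries Function

theorem Finset.sum_product_pow_add_add {R : Type*} [CommSemiring R] (x : R) (s : Finset ℕ)
    (k : ℕ) : ∑ p ∈ s ×ˢ s, x ^ (p.1 + p.2 + k) = x ^ k * (∑ i ∈ s, x ^ i) ^ 2 := by
  rw [sq, sum_mul_sum, ← sum_product', mul_sum]
  exact sum_congr rfl fun _ _ => by ring

theorem Finset.card_biUnion_product {ι κ α β : Type*} [DecidableEq α] [DecidableEq β]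
    {s : ι → Finset α} {t : κ → Finset β} (hs : Pairwise (Disjoint on s))
    (ht : Pairwise (Disjoint on t)) (S : Finset (ι × κ)) :
    #(S.biUnion fun p => s p.1 ×ˢ t p.2) = ∑ p ∈ S, #(s p.1) * #(t p.2) := by
  rw [card_biUnion]
  · simp only [card_product]
  · intro p _ q _ hpq
    rw [onFun, disjoint_product]
    by_cases h : p.1 = q.1
    · exact .inr (ht fun h' => hpq (Prod.ext h h'))
    · exact .inl (hs h)

namespace Fml

def equivSum_s1 : Fml ≃ (ℕ × ℕ) ⊕ Fml ⊕ (Fml × Fml) ⊕ (Fml × Fml) ⊕ Fml ⊕ Fml where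
  toFun
    | mem i j => .inl (i, j)
    | neg φ => .inr <| .inl φ
    | conj φ ψ => .inr <| .inr <| .inl (φ, ψ)
    | disj φ ψ => .inr <| .inr <| .inr <| .inl (φ, ψ)
    | all φ => .inr <| .inr <| .inr <| .inr <| .inl φ
    | ex φ => .inr <| .inr <| .inr <| .inr <| .inr φ
  invFun
    | .inl (i, j) => mem i j
    | .inr <| .inl φ => neg φ
    | .inr <| .inr <| .inl (φ, ψ) => conj φ ψ
    | .inr <| .inr <| .inr <| .inl (φ, ψ) => disj φ ψ
    | .inr <| .inr <| .inr <| .inr <| .inl φ => all φ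
    | .inr <| .inr <| .inr <| .inr <| .inr φ => ex φ
  left_inv φ := by cases φ <;> rfl
  right_inv x := by rcases x with ⟨⟩ | _ | ⟨⟩ | ⟨⟩ | _ | _ <;> rfl

def openOfSize : ℕ → ℕ → Finset Fml
  | _, 0 => ∅
  | m, n + 1 =>
    let pairs := (antidiagonal n).attach.biUnion fun p =>
      openOfSize m p.1.1 ×ˢ openOfSize m p.1.2
    ({p ∈ range m ×ˢ range m | p.1 + p.2 + 3 = n + 1}.disjSum <|
      (openOfSize m n).disjSum <| pairs.disjSum <| pairs.disjSum <|
      (openOfSize (m + 1) n).disjSum (openOfSize (m + 1) n)).map equivSum_s1.symm.toEmbedding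
termination_by _ n => n
decreasing_by all_goals first | omega | (have := mem_antidiagonal.mp p.2; omega)

theorem mem_openOfSize {φ : Fml} {m n : ℕ} : φ ∈ openOfSize m n ↔ φ.OpenAt m ∧ φ.size = n := by
  induction φ generalizing m n <;> cases n <;>
    simp [openOfSize, equivSum_s1, size, OpenAt, and_assoc, *]

theorem pairwise_disjoint_openOfSize (m : ℕ) : Pairwise (Disjoint on openOfSize m) :=
  fun _ _ hne => disjoint_left.mpr fun _ h h' =>
    hne ((mem_openOfSize.mp h).2.symm.trans (mem_openOfSize.mp h').2)

theorem card_openOfSize_succ (m n : ℕ) :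
    #(openOfSize m (n + 1)) = #{p ∈ range m ×ˢ range m | p.1 + p.2 + 3 = n + 1}
      + #(openOfSize m n)
      + 2 * ∑ p ∈ antidiagonal n, #(openOfSize m p.1) * #(openOfSize m p.2)
      + 2 * #(openOfSize (m + 1) n) := by
  rw [openOfSize, card_map]
  simp only [card_disjSum,
    attach_biUnion (f := fun p : ℕ × ℕ => openOfSize m p.1 ×ˢ openOfSize m p.2), card_biUnion_product (pairwise_disjoint_openOfSize m) (pairwise_disjoint_openOfSize m)]
  ring

end Fml

theorem countOpen_eq_card (m n : ℕ) : countOpen m n = #(Fml.openOfSize m n) := by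
  simp_rw [countOpen, ← Fml.mem_openOfSize, Nat.card_eq_finsetCard]

theorem phiOpen_eq_sum_add_X_mul (m : ℕ) :
    PhiOpen m = ∑ p ∈ range m ×ˢ range m, X ^ (p.1 + p.2 + 3)
      + X * (PhiOpen m + 2 * PhiOpen m ^ 2 + 2 * PhiOpen (m + 1)) := by
  ext (_ | n)
  · simp [PhiOpen, countOpen_eq_card, Fml.openOfSize]
  · simp only [map_add, map_sum, coeff_succ_X_mul, coeff_X_pow, sum_boole, @eq_comm _ (n + 1)]
    simp only [PhiOpen, two_mul, map_add, coeff_mk, sq, coeff_mul, countOpen_eq_card,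
      Fml.card_openOfSize_succ]
    push_cast
    ring

open PowerSeries in
/-- For every `m`,
`(1 − X)²·Φ_m(X) = X³·(1 − X^m)² + (1 − X)²·(2X·Φ_{m+1}(X) + X·Φ_m(X) + 2X·Φ_m(X)²)`. -/
theorem phiOpen_algebraic_equation (m : ℕ) :
    (1 - X) ^ 2 * PhiOpen m
      = X ^ 3 * (1 - X ^ m) ^ 2
        + (1 - X) ^ 2 * (2 * X * PhiOpen (m + 1) + X * PhiOpen m + 2 * X * (PhiOpen m) ^ 2) := by
  conv_lhs => rw [phiOpen_eq_sum_add_X_mul, sum_product_pow_add_add]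
  rw [← mul_neg_geom_sum]
  ring
end

section
/- A theory T in the first-order language with one binary relation symbol is inconsistent (unsatisfiable) if and only if the asymptotic density of its theorems exists and equals 1, i.e. if and only if |{φ : |φ| = n and T ⊨ φ}| / count_0(n) → 1 as n → ∞. -/
/-- Extend a De Bruijn environment with a new value for index `0`. -/
def Fml.consEnv {M : Type} (a : M) (env : ℕ → M) : ℕ → M
  | 0 => a
  | n + 1 => env n

/-- Tarskian satisfaction of a De Bruijn formula in a structure `(M, r)` with
one binary relation `r`, under the environment `env`. -/
def Fml.Sat {M : Type} (r : M → M → Prop) : (ℕ → M) → Fml → Prop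
  | env, mem i j  => r (env i) (env j)
  | env, neg φ    => ¬ φ.Sat r env
  | env, conj φ ψ => φ.Sat r env ∧ ψ.Sat r env
  | env, disj φ ψ => φ.Sat r env ∨ ψ.Sat r env
  | env, all φ    => ∀ a : M, φ.Sat r (consEnv a env)
  | env, ex φ     => ∃ a : M, φ.Sat r (consEnv a env)

/-- `Models T φ` (`T ⊨ φ`): `φ` holds in every nonempty model of `T` over the
language with one binary relation symbol. -/
def Models (T : Set Fml) (φ : Fml) : Prop :=
  ∀ (M : Type) (r : M → M → Prop) (env : ℕ → M),
    (∀ ψ ∈ T, ψ.Sat r env) → φ.Sat r env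

/-- A theory is consistent when it is satisfiable, i.e. has a nonempty model. -/
def Satisfiable (T : Set Fml) : Prop :=
  ∃ (M : Type) (r : M → M → Prop) (env : ℕ → M), ∀ ψ ∈ T, ψ.Sat r env

/-- The number of theorems of `T` (sentences `φ` with `T ⊨ φ`) of size `n`. -/
noncomputable def countThm (T : Set Fml) (n : ℕ) : ℕ :=
  Nat.card {φ : Fml // φ.OpenAt 0 ∧ Models T φ ∧ φ.size = n}

/-! If `T` has a model, theorems of `T` are true in it, and every sentence of size `n` is false
there or has a false negation of size `n + 1`. So if theorems had density `1`, false sentences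
would have density `0`, and the number of sentences of size `n + 1` would eventually exceed any
fixed multiple of the number of size `n`. This contradicts the bound `8ⁿ` given by writing
formulae in Polish notation with unary indices, an injective code whose length is the size.
Conversely, if `T` is inconsistent every sentence is a theorem, and there are sentences of
every size `n ≥ 4`. -/

namespace Fml

def unary (i : ℕ) : List (Fin 8) := List.replicate i 0 ++ [1]

def encode : Fml → List (Fin 8)
  | mem i j  => 2 :: (unary i ++ unary j)
  | neg φ    => 3 :: encode φ
  | conj φ ψ => 4 :: (encode φ ++ encode ψ)
  | disj φ ψ => 5 :: (encode φ ++ encode ψ)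
  | all φ    => 6 :: encode φ
  | ex φ     => 7 :: encode φ

theorem length_encode (φ : Fml) : φ.encode.length = φ.size := by
  induction φ <;> simp_all [encode, unary, size]; omega

theorem unary_append_inj {i j : ℕ} {s t : List (Fin 8)} (h : unary i ++ s = unary j ++ t) :
    i = j ∧ s = t := by
  induction i generalizing j with
  | zero => cases j <;> simp_all [unary, List.replicate_succ]
  | succ i ih =>
    cases j with
    | zero => simp [unary, List.replicate_succ] at h
    | succ j => simpa using ih (by simpa [unary, List.replicate_succ] using h)

theorem encode_append_inj {φ ψ : Fml} {s t : List (Fin 8)} (h : φ.encode ++ s = ψ.encode ++ t) :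
    φ = ψ ∧ s = t := by
  induction φ generalizing ψ s t <;> cases ψ <;> simp only [encode, List.cons_append,
    List.cons.injEq, List.append_assoc, true_and, false_and, Fin.reduceEq] at h ⊢
  case mem.mem =>
    obtain ⟨rfl, h'⟩ := unary_append_inj h
    simpa using unary_append_inj h'
  case neg.neg _ ih _ | all.all _ ih _ | ex.ex _ ih _ => simpa using ih h
  case conj.conj _ _ ih₁ ih₂ _ _ | disj.disj _ _ ih₁ ih₂ _ _ =>
    obtain ⟨rfl, h'⟩ := ih₁ h
    simpa using ih₂ h'

theorem encode_injective : Function.Injective encode := fun φ ψ h ↦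
  (encode_append_inj (s := []) (t := []) (by rw [h])).1

def encodeVector (n : ℕ) : {φ : Fml // φ.size = n} ↪ List.Vector (Fin 8) n where
  toFun φ := ⟨φ.1.encode, by rw [length_encode, φ.2]⟩
  inj' _ _ h := Subtype.ext (encode_injective (congrArg Subtype.val h))

instance (n : ℕ) : Finite {φ : Fml // φ.size = n} :=
  Finite.of_injective _ (encodeVector n).injective

theorem card_size_le (n : ℕ) : Nat.card {φ : Fml // φ.size = n} ≤ 8 ^ n := by
  simpa [Nat.card_eq_fintype_card, card_vector] using
    Nat.card_le_card_of_injective _ (encodeVector n).injective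

instance (P : Fml → Prop) (n : ℕ) : Finite {φ : Fml // P φ ∧ φ.size = n} :=
  Finite.of_injective _ (Subtype.impEmbedding _ _ fun _ h ↦ h.2).injective

instance (P Q : Fml → Prop) (n : ℕ) : Finite {φ : Fml // P φ ∧ Q φ ∧ φ.size = n} :=
  Finite.of_injective _ (Subtype.impEmbedding _ _ fun _ h ↦ h.2.2).injective

theorem size_neg_iterate (k : ℕ) (φ : Fml) : (neg^[k] φ).size = φ.size + k := by
  induction k with
  | zero => rfl
  | succ k ih => rw [Function.iterate_succ_apply', size, ih, Nat.add_assoc]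

theorem openAt_neg_iterate {m : ℕ} (k : ℕ) {φ : Fml} (h : φ.OpenAt m) : (neg^[k] φ).OpenAt m := by
  induction k with
  | zero => exact h
  | succ k ih => rwa [Function.iterate_succ_apply', OpenAt]

end Fml

open Filter

theorem countOpen_le_pow (m n : ℕ) : countOpen m n ≤ 8 ^ n :=
  (Nat.card_le_card_of_injective _ (Subtype.impEmbedding _ _ fun _ h ↦ h.2).injective).trans
    (Fml.card_size_le n)

theorem countOpen_pos (m : ℕ) {n : ℕ} (hn : 4 ≤ n) : 0 < countOpen m n := by
  refine Nat.card_pos_iff.2 ⟨⟨⟨Fml.neg^[n - 4] (.all (.mem 0 0)), ?_, ?_⟩⟩, inferInstance⟩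
  · exact Fml.openAt_neg_iterate _ ⟨Nat.succ_pos m, Nat.succ_pos m⟩
  · rw [Fml.size_neg_iterate]; simp only [Fml.size]; omega

theorem countThm_eq_countOpen {T : Set Fml} (hT : ¬ Satisfiable T) (n : ℕ) :
    countThm T n = countOpen 0 n :=
  Nat.card_congr <| Equiv.subtypeEquivRight fun _ ↦
    ⟨fun h ↦ ⟨h.1, h.2.2⟩, fun h ↦ ⟨h.1, fun M r env hM ↦ (hT ⟨M, r, env, hM⟩).elim, h.2⟩⟩

noncomputable def countFalse {M : Type} (r : M → M → Prop) (env : ℕ → M) (m n : ℕ) : ℕ :=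
  Nat.card {φ : Fml // φ.OpenAt m ∧ ¬ φ.Sat r env ∧ φ.size = n}

section

variable {M : Type} {r : M → M → Prop} {env : ℕ → M}

theorem countThm_add_countFalse_le {T : Set Fml} (hM : ∀ ψ ∈ T, ψ.Sat r env) (n : ℕ) :
    countThm T n + countFalse r env 0 n ≤ countOpen 0 n := by
  rw [countThm, countFalse, ← Nat.card_sum]
  refine Nat.card_le_card_of_injective
    (Sum.elim (fun φ ↦ ⟨φ.1, φ.2.1, φ.2.2.2⟩) (fun φ ↦ ⟨φ.1, φ.2.1, φ.2.2.2⟩)) ?_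
  rintro (φ | φ) (ψ | ψ) h <;> simp only [Sum.elim_inl, Sum.elim_inr, Subtype.mk.injEq] at h
  · exact congrArg Sum.inl (Subtype.ext h)
  · exact (ψ.2.2.1 (h ▸ φ.2.2.1 M r env hM)).elim
  · exact (φ.2.2.1 (h ▸ ψ.2.2.1 M r env hM)).elim
  · exact congrArg Sum.inr (Subtype.ext h)

theorem countOpen_le_countFalse_add (m n : ℕ) :
    countOpen m n ≤ countFalse r env m n + countFalse r env m (n + 1) := by
  classical
  rw [countOpen, countFalse, countFalse, ← Nat.card_sum]
  refine Nat.card_le_card_of_injective (fun φ ↦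
    if hφ : φ.1.Sat r env then .inr ⟨.neg φ.1, φ.2.1, not_not_intro hφ, by rw [Fml.size, φ.2.2]⟩
    else .inl ⟨φ.1, φ.2.1, hφ, φ.2.2⟩) ?_
  intro φ ψ h
  by_cases hφ : φ.1.Sat r env <;> by_cases hψ : ψ.1.Sat r env <;> simp [hφ, hψ] at h <;>
    exact Subtype.ext h

end

theorem eventually_le_mul_of_tendsto_div_one {t f a : ℕ → ℕ} (hle : ∀ n, t n + f n ≤ a n)
    (ht : Tendsto (fun n ↦ (t n : ℝ) / a n) atTop (nhds 1)) {ε : ℝ} (hε : 0 < ε) :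
    ∀ᶠ n in atTop, (f n : ℝ) ≤ ε * a n := by
  filter_upwards [ht.eventually (eventually_gt_nhds (sub_lt_self 1 hε))] with n hn
  have hle' : (t n : ℝ) + f n ≤ a n := by exact_mod_cast hle n
  rcases (Nat.cast_nonneg (a n) : (0 : ℝ) ≤ a n).eq_or_lt with ha | ha
  · rw [← ha] at hle' ⊢; linarith [(Nat.cast_nonneg (t n) : (0 : ℝ) ≤ t n)]
  · rw [lt_div_iff₀ ha] at hn; linarith

theorem eventually_mul_le_succ_of_le_add_succ {f a : ℕ → ℕ}
    (hle : ∀ n, a n ≤ f n + f (n + 1)) (c : ℕ)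
    (hf : ∀ᶠ n in atTop, (f n : ℝ) ≤ (c + 1 : ℝ)⁻¹ * a n) :
    ∀ᶠ n in atTop, c * a n ≤ a (n + 1) := by
  filter_upwards [hf, (tendsto_add_atTop_nat 1).eventually hf] with n hn hn₁
  have hle' : (a n : ℝ) ≤ f n + f (n + 1) := by exact_mod_cast hle n
  have hc : (0 : ℝ) < c + 1 := by positivity
  rw [inv_mul_eq_div, le_div_iff₀ hc] at hn hn₁
  have : (c : ℝ) * a n ≤ a (n + 1) := by nlinarith
  exact_mod_cast this

theorem not_eventually_mul_le_succ {a : ℕ → ℕ} {b c : ℕ} (hb : ∀ n, a n ≤ b ^ n)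
    (hbc : 2 * b ≤ c) (hpos : ∀ᶠ n in atTop, 0 < a n) :
    ¬ ∀ᶠ n in atTop, c * a n ≤ a (n + 1) := by
  intro hgrowth
  obtain ⟨N, hN⟩ := eventually_atTop.1 (hpos.and hgrowth)
  have hgeom (k : ℕ) : c ^ k * a N ≤ a (N + k) := by
    induction k with
    | zero => simp
    | succ k ih =>
      calc c ^ (k + 1) * a N = c * (c ^ k * a N) := by ring
        _ ≤ c * a (N + k) := by gcongr
        _ ≤ a (N + k + 1) := (hN _ (by omega)).2
  set k := b ^ N
  have hchain : 2 ^ k * b ^ k ≤ b ^ N * b ^ k :=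
    calc 2 ^ k * b ^ k = (2 * b) ^ k := (mul_pow 2 b k).symm
      _ ≤ c ^ k := by gcongr
      _ ≤ c ^ k * a N := Nat.le_mul_of_pos_right _ (hN N le_rfl).1
      _ ≤ a (N + k) := hgeom k
      _ ≤ b ^ N * b ^ k := (hb _).trans_eq (pow_add b N k)
  have hbk : 0 < b ^ k := Nat.pos_of_mul_pos_left ((hN (N + k) (by omega)).1.trans_le
    ((hb _).trans_eq (pow_add b N k)))
  exact k.lt_two_pow_self.not_ge (Nat.le_of_mul_le_mul_right hchain hbk)

open Filter in
theorem inconsistent_iff_density_one_general (T : Set Fml) :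
    ¬ Satisfiable T ↔
      Tendsto (fun n : ℕ => (countThm T n : ℝ) / (countOpen 0 n : ℝ))
        atTop (nhds 1) := by
  constructor
  · intro hT
    refine tendsto_const_nhds.congr' ?_
    filter_upwards [eventually_ge_atTop 4] with n hn
    rw [countThm_eq_countOpen hT, div_self (by exact_mod_cast (countOpen_pos 0 hn).ne')]
  · rintro hdensity ⟨_, r, env, hM⟩
    have hfalse := eventually_le_mul_of_tendsto_div_one (countThm_add_countFalse_le hM) hdensity
      (ε := (16 + 1 : ℝ)⁻¹) (by positivity)
    refine not_eventually_mul_le_succ (countOpen_le_pow 0) (le_refl 16)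
      (eventually_atTop.2 ⟨4, fun _ ↦ countOpen_pos 0⟩) ?_
    exact eventually_mul_le_succ_of_le_add_succ (countOpen_le_countFalse_add 0) 16
      (by exact_mod_cast hfalse)

open Filter in
/-- A theory `T` (a set of sentences) is inconsistent (unsatisfiable) if and
only if the asymptotic density of its theorems exists and equals `1`:
`|{φ : |φ| = n ∧ T ⊨ φ}| / count_0(n) → 1` as `n → ∞`. -/
theorem inconsistent_iff_density_one (T : Set Fml) (hT : ∀ ψ ∈ T, ψ.OpenAt 0) :
    ¬ Satisfiable T ↔
      Tendsto (fun n : ℕ => (countThm T n : ℝ) / (countOpen 0 n : ℝ))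
        atTop (nhds 1) :=
  inconsistent_iff_density_one_general T
end
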